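/- arXiv:quant-ph/0602157 — 2 statements merged into one kernel-verified Lean document; each statement's English description precedes it below -/
import Mathlib

section
/- If each noise operator N_i in a set 𝒩 is invertible (as a bijection on {0,1}^m mapping C into {0,1}^m), then 𝒩 is correctable by some decoder if and only if every product N_j^{-1} ∘ N_i is detectable by the code C. -/
/-- If each noise operator `N i` is invertible (a bijection on `Fin m → ZMod 2`),
then the family is correctable by some decoder iff every product `(N j)⁻¹ ∘ (N i)`
is detectable by the code `C`. -/
theorem correctable_iff_products_detectable (m : ℕ) (C : Set (Fin m → ZMod 2))
    (ι : Type*) (N : ι → (Fin m → ZMod 2) ≃ (Fin m → ZMod 2)) :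
    (∃ D : (Fin m → ZMod 2) → (Fin m → ZMod 2),
        ∀ i, ∀ c ∈ C, D (N i c) = c) ↔
      (∀ i j, ∀ c ∈ C, (N j).symm (N i c) = c ∨ (N j).symm (N i c) ∉ C) := by
  constructor
  · rintro ⟨D, hD⟩ i j c hc
    by_cases h : (N j).symm (N i c) ∈ C
    · left
      have h1 : D (N j ((N j).symm (N i c))) = (N j).symm (N i c) := hD j _ h
      rw [Equiv.apply_symm_apply] at h1
      rw [← h1, hD i c hc]
    · right; exact h
  · intro hdet
    classical
    refine ⟨fun x => if h : ∃ c, c ∈ C ∧ ∃ i, N i c = x then h.choose else x, ?_⟩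
    intro i c hc
    have hex : ∃ c', c' ∈ C ∧ ∃ i', N i' c' = N i c := ⟨c, hc, i, rfl⟩
    simp only [dif_pos hex]
    obtain ⟨hcC, i', hi'⟩ := hex.choose_spec
    have := hdet i' i hex.choose hcC
    rw [hi', Equiv.symm_apply_apply] at this
    rcases this with h | h
    · exact h.symm
    · exact absurd hc h
end

section
/- There is no unitary operator U on H ⊗ H (H a complex Hilbert space of dimension ≥ 2) and fixed state |b⟩ such that U(|ψ⟩ ⊗ |b⟩) = |ψ⟩ ⊗ |ψ⟩ for all unit vectors |ψ⟩ ∈ H (the no-cloning theorem). -/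
/-- The tensor product of two states of an `n`-dimensional system, realized on
`EuclideanSpace ℂ (Fin n × Fin n)`. -/
noncomputable def tensorState (n : ℕ) (ψ φ : EuclideanSpace ℂ (Fin n)) :
    EuclideanSpace ℂ (Fin n × Fin n) :=
  (EuclideanSpace.equiv (Fin n × Fin n) ℂ).symm (fun p => ψ p.1 * φ p.2)

/-!
A linear isometry preserves inner products, so if it clones `ψ` and `φ` then
`⟪ψ, φ⟫ ⟪b, b⟫ = ⟪ψ, φ⟫ ^ 2`, i.e. `⟪ψ, φ⟫ ∈ {0, 1}`. In dimension at least two the unit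
vectors `e₀` and `(3/5) e₀ + (4/5) e₁` have inner product `3/5`, so they cannot both be cloned.
-/

open scoped InnerProductSpace

lemma inner_tensorState (n : ℕ) (ψ φ ψ' φ' : EuclideanSpace ℂ (Fin n)) :
    ⟪tensorState n ψ φ, tensorState n ψ' φ'⟫_ℂ = ⟪ψ, ψ'⟫_ℂ * ⟪φ, φ'⟫_ℂ := by
  simp only [tensorState, PiLp.inner_apply, RCLike.inner_apply, EuclideanSpace.equiv, map_mul,
    PiLp.continuousLinearEquiv_symm_apply]
  rw [Fintype.sum_prod_type, Finset.sum_mul_sum]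
  exact Finset.sum_congr rfl fun i _ => Finset.sum_congr rfl fun j _ => by ring

lemma inner_eq_zero_or_eq_one_of_clones {n : ℕ}
    {U : EuclideanSpace ℂ (Fin n × Fin n) →ₗᵢ[ℂ] EuclideanSpace ℂ (Fin n × Fin n)}
    {b ψ φ : EuclideanSpace ℂ (Fin n)} (hb : ‖b‖ = 1)
    (hψ : U (tensorState n ψ b) = tensorState n ψ ψ)
    (hφ : U (tensorState n φ b) = tensorState n φ φ) :
    ⟪ψ, φ⟫_ℂ = 0 ∨ ⟪ψ, φ⟫_ℂ = 1 := by
  have hbb : ⟪b, b⟫_ℂ = 1 := by simp [inner_self_eq_norm_sq_to_K, hb]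
  have h := U.inner_map_map (tensorState n ψ b) (tensorState n φ b)
  rw [hψ, hφ, inner_tensorState, inner_tensorState, hbb] at h
  have : ⟪ψ, φ⟫_ℂ * (⟪ψ, φ⟫_ℂ - 1) = 0 := by linear_combination h
  simpa [sub_eq_zero] using this

lemma exists_norm_eq_one_inner_ne_zero_ne_one {𝕜 E ι : Type*} [RCLike 𝕜]
    [NormedAddCommGroup E] [InnerProductSpace 𝕜 E] {v : ι → E} (hv : Orthonormal 𝕜 v)
    {i j : ι} (hij : i ≠ j) :
    ∃ ψ φ : E, ‖ψ‖ = 1 ∧ ‖φ‖ = 1 ∧ ⟪ψ, φ⟫_𝕜 ≠ 0 ∧ ⟪ψ, φ⟫_𝕜 ≠ 1 := by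
  set φ := (3 / 5 : 𝕜) • v i + (4 / 5 : 𝕜) • v j
  have hij' : ⟪v i, v j⟫_𝕜 = 0 := hv.inner_eq_zero hij
  have hφ : ‖φ‖ * ‖φ‖ = 1 := by
    rw [norm_add_sq_eq_norm_sq_add_norm_sq_of_inner_eq_zero (𝕜 := 𝕜) _ _
      (by simp [inner_smul_left, inner_smul_right, hij']), norm_smul, norm_smul,
      hv.norm_eq_one, hv.norm_eq_one]
    norm_num
  have hinner : ⟪v i, φ⟫_𝕜 = 3 / 5 := by
    simp [φ, inner_add_right, inner_smul_right, hij', inner_self_eq_norm_sq_to_K, hv.norm_eq_one]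
  refine ⟨v i, φ, hv.norm_eq_one i, ?_, ?_, ?_⟩
  · exact (mul_self_inj (norm_nonneg φ) zero_le_one).mp (by rw [hφ, one_mul])
  all_goals rw [hinner]; norm_num

/-- The no-cloning theorem: there is no linear isometry `U` on `H ⊗ H`
(`H` of dimension `n ≥ 2`) and fixed unit state `b` such that
`U (ψ ⊗ b) = ψ ⊗ ψ` for all unit vectors `ψ`. -/
theorem no_cloning (n : ℕ) (hn : 2 ≤ n) :
    ¬ ∃ (U : EuclideanSpace ℂ (Fin n × Fin n) →ₗᵢ[ℂ] EuclideanSpace ℂ (Fin n × Fin n))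
        (b : EuclideanSpace ℂ (Fin n)), ‖b‖ = 1 ∧
        ∀ ψ : EuclideanSpace ℂ (Fin n), ‖ψ‖ = 1 →
          U (tensorState n ψ b) = tensorState n ψ ψ := by
  rintro ⟨U, b, hb, hU⟩
  obtain ⟨ψ, φ, hψ, hφ, h0, h1⟩ := exists_norm_eq_one_inner_ne_zero_ne_one
    (EuclideanSpace.basisFun (Fin n) ℂ).orthonormal
    (i := ⟨0, by omega⟩) (j := ⟨1, by omega⟩) (by simp)
  rcases inner_eq_zero_or_eq_one_of_clones hb (hU ψ hψ) (hU φ hφ) with h | h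
  exacts [h0 h, h1 h]
end
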